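/- arXiv:math/0701314 — 3 statements merged into one kernel-verified Lean document; each statement's English description precedes it below -/
import Mathlib

section
/- Summing the multinomial coefficients gamma^{(j)}_{i_1,...,i_j} = j!/(i_1!...i_j!(j+1-(i_1+...+i_j))!) over all nonnegative integer tuples (i_1,...,i_j) with i_1 + 2 i_2 + ... + j i_j = j yields the Catalan number C_j = (1/(j+1)) * binomial(2j, j). -/
/-!
Put `F = (j + 1 - ∑ i_k, i_1, …, i_j)`. Then `γ^{(j)}_i` is the multinomial coefficient of `F`
divided by `j + 1`, and the tuples `F` that arise are exactly the compositions of `j + 1` into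
parts indexed by `0, …, j` with `∑ m F_m = j`. By the multinomial theorem the sum of their
multinomial coefficients is the coefficient of `X^j` in `(1 + X + ⋯ + X^j)^(j+1)`. Below degree
`j + 1` this power agrees with `(1 - X)^{-(j+1)} = ∑ choose (j + n) j X^n`, so the sum is
`choose (2j) j`.
-/

open Finset Nat

namespace PowerSeries

variable {R : Type*}

theorem sum_range_X_pow_eq_trunc_mk_one [CommRing R] (n : ℕ) :
    ∑ m ∈ range n, (X : R⟦X⟧) ^ m = (trunc n (mk 1 : R⟦X⟧) : R⟦X⟧) := by
  ext m
  simp [coeff_X_pow, coeff_trunc]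

theorem coeff_sum_range_X_pow_pow [CommRing R] {n j : ℕ} (h : j < n) (d : ℕ) :
    coeff j ((∑ m ∈ range n, (X : R⟦X⟧) ^ m) ^ (d + 1)) = (d + j).choose d := by
  have key := congrArg (Polynomial.coeff · j) (trunc_trunc_pow (mk 1 : R⟦X⟧) n (d + 1))
  simp only [coeff_trunc, if_pos h, mk_one_pow_eq_mk_choose_add, coeff_mk] at key
  rw [sum_range_X_pow_eq_trunc_mk_one, key]

theorem coeff_sum_X_pow_pow [CommSemiring R] {ι : Type*} [Fintype ι] [DecidableEq ι]
    (w : ι → ℕ) (k j : ℕ) :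
    coeff j ((∑ i, (X : R⟦X⟧) ^ w i) ^ k) =
      ∑ F ∈ (piAntidiag univ k).filter (fun F => ∑ i, w i * F i = j), (multinomial univ F : R) := by
  rw [sum_pow_eq_sum_piAntidiag, map_sum, sum_filter]
  refine sum_congr rfl fun F _ => ?_
  simp_rw [← pow_mul, prod_pow_eq_pow_sum, ← map_natCast (C (R := R)), coeff_C_mul_X_pow]
  simp [eq_comm]

end PowerSeries

theorem Nat.sum_multinomial_filter_sum_val_mul_eq_centralBinom (j : ℕ) :
    ∑ F ∈ (piAntidiag univ (j + 1)).filter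
        (fun F : Fin (j + 1) → ℕ => ∑ m : Fin (j + 1), (m : ℕ) * F m = j),
      multinomial univ F = centralBinom j := by
  apply Nat.cast_injective (R := ℤ)
  rw [Nat.cast_sum, ← PowerSeries.coeff_sum_X_pow_pow,
    Fin.sum_univ_eq_sum_range (PowerSeries.X ^ ·),
    PowerSeries.coeff_sum_range_X_pow_pow (lt_add_one j), centralBinom_eq_two_mul_choose, two_mul]

theorem Nat.cast_multinomial {α K : Type*} [Semifield K] [CharZero K] (s : Finset α)
    (f : α → ℕ) : (multinomial s f : K) = (∑ i ∈ s, f i)! / ∏ i ∈ s, ((f i)! : K) := by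
  rw [multinomial, Nat.cast_div (prod_factorial_dvd_factorial_sum s f)
    (Nat.cast_ne_zero.2 (prod_factorial_pos s f).ne'), Nat.cast_prod]

namespace Fin

theorem sum_val_mul_eq_sum_succ_mul_tail {n : ℕ} (F : Fin (n + 1) → ℕ) :
    ∑ m : Fin (n + 1), (m : ℕ) * F m = ∑ k : Fin n, (k.1 + 1) * tail F k := by
  simp [sum_univ_succ, tail]

theorem sum_le_sum_succ_mul {n : ℕ} (i : Fin n → ℕ) : ∑ k, i k ≤ ∑ k : Fin n, (k.1 + 1) * i k :=
  Finset.sum_le_sum fun k _ => Nat.le_mul_of_pos_left _ k.1.succ_pos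

theorem cons_mem_filter_piAntidiag {n j : ℕ} {i : Fin n → ℕ}
    (hi : ∑ k : Fin n, (k.1 + 1) * i k = j) :
    (cons (j + 1 - ∑ k, i k) i : Fin (n + 1) → ℕ) ∈ (piAntidiag univ (j + 1)).filter
      (fun F : Fin (n + 1) → ℕ => ∑ m : Fin (n + 1), (m : ℕ) * F m = j) := by
  have := hi ▸ sum_le_sum_succ_mul i
  simp only [mem_filter, mem_piAntidiag, sum_val_mul_eq_sum_succ_mul_tail, tail_cons, sum_cons,
    hi, mem_univ, implies_true, and_true]
  omega

theorem tail_mem_filter_piFinset {n j : ℕ} {F : Fin (n + 1) → ℕ}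
    (hF : ∑ m : Fin (n + 1), (m : ℕ) * F m = j) :
    tail F ∈ (Fintype.piFinset fun _ : Fin n => range (j + 1)).filter
      (fun i => ∑ k : Fin n, (k.1 + 1) * i k = j) := by
  rw [sum_val_mul_eq_sum_succ_mul_tail] at hF
  refine mem_filter.2 ⟨Fintype.mem_piFinset.2 fun k => mem_range.2 ?_, hF⟩
  have := (single_le_sum (fun _ _ => Nat.zero_le _) (mem_univ k)).trans
    (hF ▸ sum_le_sum_succ_mul (tail F))
  omega

theorem cons_sub_sum_tail {n j : ℕ} {F : Fin (n + 1) → ℕ} (hF : ∑ m, F m = j + 1) :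
    (cons (j + 1 - ∑ k, tail F k) (tail F) : Fin (n + 1) → ℕ) = F := by
  rw [sum_univ_succ] at hF
  simp only [← hF, tail, add_tsub_cancel_right]
  exact cons_self_tail F

end Fin

theorem factorial_div_eq_inv_succ_mul_multinomial_cons {n j : ℕ} {i : Fin n → ℕ}
    (hi : ∑ k, i k ≤ j) :
    (j ! : ℚ) / ((∏ k, (i k)!) * (j + 1 - ∑ k, i k)!) =
      1 / (j + 1) * multinomial univ (Fin.cons (j + 1 - ∑ k, i k) i : Fin (n + 1) → ℕ) := by
  rw [Nat.cast_multinomial, Fin.sum_cons, Fin.prod_univ_succ]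
  simp only [Fin.cons_zero, Fin.cons_succ]
  rw [Nat.sub_add_cancel (by omega), factorial_succ]
  push_cast
  field_simp

theorem sum_gamma_eq_catalan_general (j : ℕ) :
    (∑ i ∈ (Fintype.piFinset fun _ : Fin j => Finset.range (j + 1)).filter
        (fun i => ∑ k : Fin j, (k.1 + 1) * i k = j),
      (j ! : ℚ) / ((∏ k : Fin j, (i k)!) * (j + 1 - ∑ k : Fin j, i k)!))
      = (1 / (j + 1 : ℚ)) * (Nat.choose (2 * j) j : ℚ) := by
  rw [← centralBinom_eq_two_mul_choose, ← sum_multinomial_filter_sum_val_mul_eq_centralBinom,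
    Nat.cast_sum, mul_sum]
  refine sum_nbij' (fun i => Fin.cons (j + 1 - ∑ k, i k) i) Fin.tail
    (fun i hi => Fin.cons_mem_filter_piAntidiag (mem_filter.1 hi).2)
    (fun F hF => Fin.tail_mem_filter_piFinset (mem_filter.1 hF).2)
    (fun i _ => Fin.tail_cons _ _)
    (fun F hF => Fin.cons_sub_sum_tail (mem_piAntidiag.1 (mem_filter.1 hF).1).1)
    (fun i hi => ?_)
  exact factorial_div_eq_inv_succ_mul_multinomial_cons
    ((Fin.sum_le_sum_succ_mul i).trans (mem_filter.1 hi).2.le)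

/-- Summing the multinomial coefficients
`γ^{(j)}_{i_1,…,i_j} = j!/(i_1!⋯i_j!(j+1-(i_1+⋯+i_j))!)` over all nonnegative
integer tuples `(i_1,…,i_j)` with `i_1 + 2 i_2 + ⋯ + j i_j = j` yields the
Catalan number `C_j = (1/(j+1)) * binomial (2j) j`. -/
theorem sum_gamma_eq_catalan (j : ℕ) (hj : 0 < j) :
    (∑ i ∈ (Fintype.piFinset fun _ : Fin j => Finset.range (j + 1)).filter
        (fun i => ∑ k : Fin j, (k.1 + 1) * i k = j),
      (j ! : ℚ) / ((∏ k : Fin j, (i k)!) * (j + 1 - ∑ k : Fin j, i k)!))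
      = (1 / (j + 1 : ℚ)) * (Nat.choose (2 * j) j : ℚ) :=
  sum_gamma_eq_catalan_general j
end

section
/- In the ring of formal power series in two variables over the rationals, let H(x) = x*M(x) where M(x) = 1 + sum_{j>=1} alpha_j x^j. Then the two-variable series H'(x) H'(y) / (H(x) - H(y))^2 - 1/(x-y)^2 is a well-defined formal power series (the apparent poles at x = y cancel), and its coefficient of x^0 y^0 equals alpha_2 - alpha_1^2. -/
/-!
Write `Q = (H(x) - H(y)) / (x - y) = ∑ α_{p+q} x^p y^q`. Differentiating `(x - y) Q = H(x) - H(y)`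
in `x`, in `y`, and then the first identity in `y`, gives
`H'(x) = Q + (x - y) Q_x`, `H'(y) = Q - (x - y) Q_y` and `Q_x - Q_y = (x - y) Q_xy`, hence
`H'(x) H'(y) - Q² = (x - y)² (Q Q_xy - Q_x Q_y)`.
As `Q(0, 0) = α₀ = 1`, `Q` is a unit and the series is `F = (Q Q_xy - Q_x Q_y) / Q² = ∂ₓ∂_y log Q`,
whose constant term is `α₂ - α₁²`.
-/

open PowerSeries

namespace PowerSeries

section CommSemiring

variable {R S : Type*} [CommSemiring R] [CommSemiring S]

theorem derivative_map (φ : R →+* S) (f : R⟦X⟧) :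
    d⁄dX S (map φ f) = map φ (d⁄dX R f) := by
  ext n
  simp [coeff_derivative]

theorem constantCoeff_derivative (f : R⟦X⟧) :
    constantCoeff (d⁄dX R f) = coeff 1 f := by
  simp [← coeff_zero_eq_constantCoeff_apply, coeff_derivative]

end CommSemiring

variable {R : Type*} [CommRing R]

/-- Reading `R⟦X⟧⟦X⟧` as `R⟦y⟧⟦x⟧` (outer variable `x`), this is `∂/∂y`; `d⁄dX R⟦X⟧` is `∂/∂x`. -/
noncomputable def innerDerivative : Derivation R R⟦X⟧⟦X⟧ R⟦X⟧⟦X⟧ :=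
  Derivation.mk'
    { toFun := fun f => mk fun n => d⁄dX R (coeff n f)
      map_add' := fun f g => by ext n : 1; simp
      map_smul' := fun r f => by ext n : 1; simp }
    fun f g => by
      rw [smul_eq_mul, smul_eq_mul, mul_comm g]
      ext n : 1
      simp only [LinearMap.coe_mk, AddHom.coe_mk, coeff_mk, coeff_mul, map_sum, map_add,
        smul_eq_mul, Derivation.leibniz, ← Finset.sum_add_distrib]
      exact Finset.sum_congr rfl fun _ _ => by ring

@[simp]
theorem coeff_innerDerivative (f : R⟦X⟧⟦X⟧) (n : ℕ) :
    coeff n (innerDerivative f) = d⁄dX R (coeff n f) := by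
  simp [innerDerivative]

@[simp]
theorem constantCoeff_innerDerivative (f : R⟦X⟧⟦X⟧) :
    constantCoeff (innerDerivative f) = d⁄dX R (constantCoeff f) := by
  rw [← coeff_zero_eq_constantCoeff_apply, coeff_innerDerivative, coeff_zero_eq_constantCoeff_apply]

@[simp]
theorem innerDerivative_C (f : R⟦X⟧) : innerDerivative (C f) = C (d⁄dX R f) := by
  ext n : 1
  simp only [coeff_innerDerivative, coeff_C]
  split_ifs <;> simp

@[simp]
theorem innerDerivative_map_C (f : R⟦X⟧) : innerDerivative (map C f) = 0 := by
  ext n : 1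
  simp

@[simp]
theorem innerDerivative_X : innerDerivative (X : R⟦X⟧⟦X⟧) = 0 := by
  simpa using innerDerivative_map_C (R := R) X

/-- The divided difference `(f(x) - f(y)) / (x - y)`, with `f(x) = map C f` and `f(y) = C f`. -/
noncomputable def divDiff (f : R⟦X⟧) : R⟦X⟧⟦X⟧ :=
  mk fun p => mk fun q => coeff (p + q + 1) f

theorem X_sub_C_X_mul_divDiff (f : R⟦X⟧) :
    (X - C X) * divDiff f = map C f - C f := by
  ext p q
  rcases p with _ | p <;> rcases q with _ | q <;>
    simp [-coeff_zero_eq_constantCoeff, divDiff, sub_mul, coeff_C_mul, coeff_succ_X_mul, coeff_C,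
      coeff_map, coeff_zero_X_mul, add_right_comm _ 1, ← add_assoc]

theorem map_C_derivative_mul_C_derivative_sub_divDiff_sq (f : R⟦X⟧) :
    map C (d⁄dX R f) * C (d⁄dX R f) - divDiff f ^ 2 =
      (X - C X) ^ 2 * (divDiff f * innerDerivative (d⁄dX R⟦X⟧ (divDiff f))
        - d⁄dX R⟦X⟧ (divDiff f) * innerDerivative (divDiff f)) := by
  set Q := divDiff f
  have hQ : (X - C X) * Q = map C f - C f := X_sub_C_X_mul_divDiff f
  have hx : map C (d⁄dX R f) = Q + (X - C X) * d⁄dX R⟦X⟧ Q := by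
    have := congrArg (d⁄dX R⟦X⟧) hQ
    simp only [Derivation.leibniz, smul_eq_mul, map_sub, derivative_X, derivative_C, sub_zero,
      mul_one, derivative_map] at this
    linear_combination -this
  have hy : C (d⁄dX R f) = Q - (X - C X) * innerDerivative Q := by
    have := congrArg innerDerivative hQ
    simp only [Derivation.leibniz, smul_eq_mul, map_sub, innerDerivative_X, innerDerivative_C,
      derivative_X, map_one, zero_sub, mul_neg, mul_one, innerDerivative_map_C] at this
    linear_combination this
  have hxy : d⁄dX R⟦X⟧ Q - innerDerivative Q = (X - C X) * innerDerivative (d⁄dX R⟦X⟧ Q) := by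
    have := congrArg innerDerivative hx
    simp only [innerDerivative_map_C, map_add, Derivation.leibniz, smul_eq_mul, map_sub,
      innerDerivative_X, innerDerivative_C, derivative_X, map_one, zero_sub, mul_neg,
      mul_one] at this
    linear_combination this
  linear_combination C (d⁄dX R f) * hx + (Q + (X - C X) * d⁄dX R⟦X⟧ Q) * hy
    + (X - C X) * Q * hxy

theorem constantCoeff_constantCoeff_divDiff_mul_sub (f : R⟦X⟧) :
    constantCoeff (constantCoeff (divDiff f * innerDerivative (d⁄dX R⟦X⟧ (divDiff f))
        - d⁄dX R⟦X⟧ (divDiff f) * innerDerivative (divDiff f))) =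
      coeff 1 f * coeff 3 f - coeff 2 f ^ 2 := by
  simp only [divDiff, map_sub, map_mul, constantCoeff_mk, constantCoeff_innerDerivative,
    constantCoeff_derivative, coeff_mk, Nat.reduceAdd, zero_add, add_zero]
  ring

theorem exists_mul_sub_sq_mul_X_sub_C_X_sq_eq {K : Type*} [Field K] (f : K⟦X⟧)
    (hf : coeff 1 f ≠ 0) :
    ∃ F : K⟦X⟧⟦X⟧,
      F * (map C f - C f) ^ 2 * (X - C X) ^ 2 =
          map C (d⁄dX K f) * C (d⁄dX K f) * (X - C X) ^ 2 - (map C f - C f) ^ 2 ∧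
        constantCoeff (constantCoeff F) =
          (coeff 1 f * coeff 3 f - coeff 2 f ^ 2) / coeff 1 f ^ 2 := by
  set Q := divDiff f
  set G := Q * innerDerivative (d⁄dX K⟦X⟧ Q) - d⁄dX K⟦X⟧ Q * innerDerivative Q
  have hQ00 : constantCoeff (constantCoeff Q) = coeff 1 f := by simp [Q, divDiff]
  obtain ⟨u, hu⟩ : IsUnit Q := by
    rw [isUnit_iff_constantCoeff, isUnit_iff_constantCoeff, hQ00]
    exact hf.isUnit
  have hu_inv : ↑u⁻¹ * Q = 1 := hu ▸ u.inv_mul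
  refine ⟨G * ↑u⁻¹ ^ 2, ?_, ?_⟩
  · rw [← X_sub_C_X_mul_divDiff]
    linear_combination (-(X - C X) ^ 2) * map_C_derivative_mul_C_derivative_sub_divDiff_sq f
      + G * (X - C X) ^ 4 * (↑u⁻¹ * Q + 1) * hu_inv
  · have h := congrArg (fun g => constantCoeff (constantCoeff g)) hu_inv
    simp only [map_mul, hQ00, map_one] at h
    rw [map_mul, map_mul, map_pow, map_pow, constantCoeff_constantCoeff_divDiff_mul_sub,
      eq_div_iff (pow_ne_zero 2 hf)]
    linear_combination (coeff 1 f * coeff 3 f - coeff 2 f ^ 2) *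
      (constantCoeff (constantCoeff (↑u⁻¹ : K⟦X⟧⟦X⟧)) * coeff 1 f + 1) * h

end PowerSeries

/-- In formal power series in two variables (realized as
`ℚ⟦y⟧⟦x⟧`), let `H(x) = x M(x)` with `M(x) = 1 + ∑_{j≥1} α_j x^j` (encoded by
`α : ℕ → ℚ` with `α 0 = 1`). The series
`H'(x)H'(y)/(H(x)-H(y))² - 1/(x-y)²` is a well-defined formal power series `F`,
i.e. `F (H(x)-H(y))² (x-y)² = H'(x)H'(y)(x-y)² - (H(x)-H(y))²`, and its
constant coefficient (of `x⁰y⁰`) equals `α₂ - α₁²`. -/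
theorem second_order_series_constant_coeff (α : ℕ → ℚ) (hα : α 0 = 1) :
    ∃ F : PowerSeries (PowerSeries ℚ),
      F * ((PowerSeries.mk fun n => PowerSeries.C (R := ℚ) (if n = 0 then 0 else α (n - 1)))
            - PowerSeries.C (R := PowerSeries ℚ)
                (PowerSeries.mk fun n => if n = 0 then 0 else α (n - 1))) ^ 2
          * ((PowerSeries.X : PowerSeries (PowerSeries ℚ))
              - PowerSeries.C (R := PowerSeries ℚ) (PowerSeries.X : PowerSeries ℚ)) ^ 2
        = (PowerSeries.mk fun n => PowerSeries.C (R := ℚ) ((n + 1 : ℚ) * α n))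
            * PowerSeries.C (R := PowerSeries ℚ) (PowerSeries.mk fun n => (n + 1 : ℚ) * α n)
            * ((PowerSeries.X : PowerSeries (PowerSeries ℚ))
                - PowerSeries.C (R := PowerSeries ℚ) (PowerSeries.X : PowerSeries ℚ)) ^ 2
          - ((PowerSeries.mk fun n => PowerSeries.C (R := ℚ) (if n = 0 then 0 else α (n - 1)))
              - PowerSeries.C (R := PowerSeries ℚ)
                  (PowerSeries.mk fun n => if n = 0 then 0 else α (n - 1))) ^ 2
      ∧ PowerSeries.constantCoeff (R := ℚ) (PowerSeries.constantCoeff (R := PowerSeries ℚ) F)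
          = α 2 - (α 1) ^ 2 := by
  set H : ℚ⟦X⟧ := mk fun n => if n = 0 then 0 else α (n - 1)
  have hH_deriv : (mk fun n => (n + 1 : ℚ) * α n) = d⁄dX ℚ H := by
    ext n
    simp [H, coeff_derivative, mul_comm]
  have hHx : (mk fun n => C (if n = 0 then 0 else α (n - 1))) = map C H := by
    ext n : 1
    simp [H]
  have hHx_deriv : (mk fun n => C ((n + 1 : ℚ) * α n)) = map C (d⁄dX ℚ H) := by
    rw [← hH_deriv]
    ext n : 1
    simp
  obtain ⟨F, hF, hF0⟩ := exists_mul_sub_sq_mul_X_sub_C_X_sq_eq H (by simp [H, hα])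
  refine ⟨F, by rwa [hHx, hHx_deriv, hH_deriv], ?_⟩
  simpa [H, hα] using hF0
end

section
/- With H(x) = x(1 + alpha_1 x + alpha_2 x^2 + ...), the coefficient of x^1 y^0 in the formal power series H'(x)H'(y)/(H(x)-H(y))^2 - 1/(x-y)^2 equals 2*alpha_3 - 4*alpha_1*alpha_2 + 2*alpha_1^3. -/
/-!
Put `U(x, y) = (H(x) - H(y)) / (x - y) = ∑ α_{i+j} xⁱ yʲ`, a unit because `U(0, 0) = α₀ = 1`.
The series in question is `∂ₓ∂ᵧ log U = (U Uₓᵧ - Uₓ Uᵧ) / U²`: differentiating `(x - y) U = H(x) - H(y)`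
once in `x` and once in `y` gives `(x - y)² (U Uₓᵧ - Uₓ Uᵧ) = H'(x) H'(y) - U²`.
Setting `y = 0` turns `U` into `M(x)`, and the coefficient of `x¹` is read off from
`F(x, 0) M(x)² = M Uₓᵧ(x, 0) - M' Uᵧ(x, 0)`.
-/

open PowerSeries

namespace SecondOrderSeries

variable {R : Type*} [CommRing R]

lemma coeff_coeff_X_sub_C_X_mul (S : R⟦X⟧⟦X⟧) (n j : ℕ) :
    coeff j (coeff n ((X - C X) * S)) =
      (if n = 0 then 0 else coeff j (coeff (n - 1) S))
        - (if j = 0 then 0 else coeff (j - 1) (coeff n S)) := by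
  rw [sub_mul, map_sub, map_sub]
  rcases n with _ | n <;> rcases j with _ | j <;>
    simp [coeff_zero_X_mul, coeff_succ_X_mul, coeff_C_mul]

lemma coeff_coeff_map_C (h : R⟦X⟧) (n j : ℕ) :
    coeff j (coeff n (map C h)) = if j = 0 then coeff n h else 0 := by
  simp [coeff_C]

variable (α : ℕ → R)

noncomputable def hSeries : R⟦X⟧ :=
  mk fun n => if n = 0 then 0 else α (n - 1)

noncomputable def hSeriesDeriv : R⟦X⟧ :=
  mk fun n => ((n : R) + 1) * α n

/- In `R⟦X⟧⟦X⟧` the outer variable is `x` and `y = C X`; a series `h` is `h(x)` as `map C h`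
and `h(y)` as `C h`. -/
noncomputable def diffQuot : R⟦X⟧⟦X⟧ :=
  mk fun i => mk fun j => α (i + j)

noncomputable def diffQuotDerivX : R⟦X⟧⟦X⟧ :=
  mk fun i => mk fun j => ((i : R) + 1) * α (i + j + 1)

noncomputable def diffQuotDerivY : R⟦X⟧⟦X⟧ :=
  mk fun i => mk fun j => ((j : R) + 1) * α (i + j + 1)

noncomputable def diffQuotDerivXY : R⟦X⟧⟦X⟧ :=
  mk fun i => mk fun j => ((i : R) + 1) * (((j : R) + 1) * α (i + j + 2))

lemma X_sub_C_X_mul_diffQuot :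
    (X - C X) * diffQuot α = map C (hSeries α) - C (hSeries α) := by
  ext n j
  rw [map_sub, map_sub, coeff_coeff_X_sub_C_X_mul]
  rcases n with _ | n <;> rcases j with _ | j <;>
    simp [diffQuot, hSeries, coeff_C]
  ring_nf

lemma diffQuot_add_X_sub_C_X_mul_diffQuotDerivX :
    diffQuot α + (X - C X) * diffQuotDerivX α = map C (hSeriesDeriv α) := by
  ext n j
  rw [map_add, map_add, coeff_coeff_X_sub_C_X_mul, coeff_coeff_map_C]
  rcases n with _ | n <;> rcases j with _ | j <;>
    simp [diffQuot, diffQuotDerivX, hSeriesDeriv]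
  <;> ring_nf

lemma X_sub_C_X_mul_diffQuotDerivY :
    (X - C X) * diffQuotDerivY α = diffQuot α - C (hSeriesDeriv α) := by
  ext n j
  rw [map_sub, map_sub, coeff_coeff_X_sub_C_X_mul]
  rcases n with _ | n <;> rcases j with _ | j <;>
    simp [diffQuot, diffQuotDerivY, hSeriesDeriv, coeff_C]
  <;> ring_nf

lemma diffQuotDerivY_sub_diffQuotDerivX_add_X_sub_C_X_mul_diffQuotDerivXY :
    diffQuotDerivY α - diffQuotDerivX α + (X - C X) * diffQuotDerivXY α = 0 := by
  ext n j
  rw [map_add, map_add, map_sub, map_sub, coeff_coeff_X_sub_C_X_mul]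
  rcases n with _ | n <;> rcases j with _ | j <;>
    simp [diffQuotDerivX, diffQuotDerivY, diffQuotDerivXY]
  <;> ring_nf

lemma X_sub_C_X_sq_mul_diffQuot_mul_diffQuotDerivXY_sub :
    (X - C X) ^ 2 * (diffQuot α * diffQuotDerivXY α - diffQuotDerivX α * diffQuotDerivY α)
      = map C (hSeriesDeriv α) * C (hSeriesDeriv α) - diffQuot α ^ 2 := by
  linear_combination (diffQuot α * (X - C X))
      * diffQuotDerivY_sub_diffQuotDerivX_add_X_sub_C_X_mul_diffQuotDerivXY α
    - (diffQuot α + (X - C X) * diffQuotDerivX α) * X_sub_C_X_mul_diffQuotDerivY α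
    + C (hSeriesDeriv α) * diffQuot_add_X_sub_C_X_mul_diffQuotDerivX α

noncomputable def secondOrderSeries : R⟦X⟧⟦X⟧ :=
  (diffQuot α * diffQuotDerivXY α - diffQuotDerivX α * diffQuotDerivY α)
    * Ring.inverse (diffQuot α) ^ 2

variable {α}

lemma isUnit_diffQuot (h : IsUnit (α 0)) : IsUnit (diffQuot α) := by
  rw [isUnit_iff_constantCoeff, ← coeff_zero_eq_constantCoeff_apply, diffQuot, coeff_mk,
    isUnit_iff_constantCoeff, constantCoeff_mk]
  exact h

lemma secondOrderSeries_mul_diffQuot_sq (h : IsUnit (α 0)) :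
    secondOrderSeries α * diffQuot α ^ 2
      = diffQuot α * diffQuotDerivXY α - diffQuotDerivX α * diffQuotDerivY α := by
  rw [secondOrderSeries, mul_assoc, ← mul_pow, mul_comm (Ring.inverse _),
    Ring.mul_inverse_cancel _ (isUnit_diffQuot h), one_pow, mul_one]

lemma secondOrderSeries_mul (h : IsUnit (α 0)) :
    secondOrderSeries α * (map C (hSeries α) - C (hSeries α)) ^ 2 * (X - C X) ^ 2
      = map C (hSeriesDeriv α) * C (hSeriesDeriv α) * (X - C X) ^ 2
        - (map C (hSeries α) - C (hSeries α)) ^ 2 := by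
  rw [← X_sub_C_X_mul_diffQuot]
  linear_combination (X - C X) ^ 4 * secondOrderSeries_mul_diffQuot_sq h
    + (X - C X) ^ 2 * X_sub_C_X_sq_mul_diffQuot_mul_diffQuotDerivXY_sub α

lemma map_constantCoeff_diffQuot : map constantCoeff (diffQuot α) = mk α := by
  ext i
  simp [diffQuot]

lemma map_constantCoeff_diffQuotDerivX :
    map constantCoeff (diffQuotDerivX α) = mk fun i => ((i : R) + 1) * α (i + 1) := by
  ext i
  simp [diffQuotDerivX]

lemma map_constantCoeff_diffQuotDerivY :
    map constantCoeff (diffQuotDerivY α) = mk fun i => α (i + 1) := by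
  ext i
  simp [diffQuotDerivY]

lemma map_constantCoeff_diffQuotDerivXY :
    map constantCoeff (diffQuotDerivXY α) = mk fun i => ((i : R) + 1) * α (i + 2) := by
  ext i
  simp [diffQuotDerivXY]

lemma coeff_one_eq_of_mul_sq_eq {f g p : R⟦X⟧} (h : f * g ^ 2 = p) (hg : constantCoeff g = 1) :
    coeff 1 f = coeff 1 p - 2 * coeff 1 g * constantCoeff p := by
  have h₀ := congrArg constantCoeff h
  have h₁ := congrArg (coeff 1) h
  simp only [map_mul, map_pow, hg, one_pow, mul_one] at h₀
  simp only [sq, coeff_one_mul, map_mul, hg, mul_one] at h₁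
  rw [← h₀, ← h₁]
  ring

lemma constantCoeff_coeff_one_secondOrderSeries (hα : α 0 = 1) :
    constantCoeff (coeff 1 (secondOrderSeries α)) = 2 * α 3 - 4 * α 1 * α 2 + 2 * α 1 ^ 3 := by
  have atY0 := congrArg (map constantCoeff) (secondOrderSeries_mul_diffQuot_sq (hα ▸ isUnit_one))
  simp only [map_mul, map_sub, map_pow, map_constantCoeff_diffQuot,
    map_constantCoeff_diffQuotDerivX, map_constantCoeff_diffQuotDerivY,
    map_constantCoeff_diffQuotDerivXY] at atY0
  rw [← coeff_map, coeff_one_eq_of_mul_sq_eq atY0 (by rw [constantCoeff_mk, hα])]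
  simp only [coeff_one_mul, map_sub, map_mul, coeff_mk, constantCoeff_mk, hα]
  push_cast
  ring

end SecondOrderSeries

open SecondOrderSeries in
/-- In formal power series in two variables (realized as
`ℚ⟦y⟧⟦x⟧`), let `H(x) = x M(x)` with `M(x) = 1 + ∑_{j≥1} α_j x^j` (encoded by
`α : ℕ → ℚ` with `α 0 = 1`). The series
`H'(x)H'(y)/(H(x)-H(y))² - 1/(x-y)²` is a well-defined formal power series `F`,
i.e. `F (H(x)-H(y))² (x-y)² = H'(x)H'(y)(x-y)² - (H(x)-H(y))²`, and its
coefficient of `x¹y⁰` equals `2α₃ - 4α₁α₂ + 2α₁³` (Table 3 of the paper). -/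
theorem second_order_series_coeff_x1y0 (α : ℕ → ℚ) (hα : α 0 = 1) :
    ∃ F : PowerSeries (PowerSeries ℚ),
      F * ((PowerSeries.mk fun n => PowerSeries.C (R := ℚ) (if n = 0 then 0 else α (n - 1)))
            - PowerSeries.C (R := PowerSeries ℚ)
                (PowerSeries.mk fun n => if n = 0 then 0 else α (n - 1))) ^ 2
          * ((PowerSeries.X : PowerSeries (PowerSeries ℚ))
              - PowerSeries.C (R := PowerSeries ℚ) (PowerSeries.X : PowerSeries ℚ)) ^ 2
        = (PowerSeries.mk fun n => PowerSeries.C (R := ℚ) ((n + 1 : ℚ) * α n))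
            * PowerSeries.C (R := PowerSeries ℚ) (PowerSeries.mk fun n => (n + 1 : ℚ) * α n)
            * ((PowerSeries.X : PowerSeries (PowerSeries ℚ))
                - PowerSeries.C (R := PowerSeries ℚ) (PowerSeries.X : PowerSeries ℚ)) ^ 2
          - ((PowerSeries.mk fun n => PowerSeries.C (R := ℚ) (if n = 0 then 0 else α (n - 1)))
              - PowerSeries.C (R := PowerSeries ℚ)
                  (PowerSeries.mk fun n => if n = 0 then 0 else α (n - 1))) ^ 2
      ∧ PowerSeries.constantCoeff (R := ℚ) (PowerSeries.coeff (R := PowerSeries ℚ) 1 F)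
          = 2 * α 3 - 4 * α 1 * α 2 + 2 * (α 1) ^ 3 := by
  exact ⟨secondOrderSeries α, secondOrderSeries_mul (hα ▸ isUnit_one),
    constantCoeff_coeff_one_secondOrderSeries hα⟩
end
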